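/- Let μ = (μ₁,…,μ_m) be a partition written as μ = (r^{a_r}, (r−1)^{a_{r−1}}, …, 1^{a_1}, 0^{a_0}) where r = μ₁, a_s = μ'_s − μ'_{s+1} for s ≥ 1 (with μ'_{r+1} = 0), a_0 = m − μ'₁, and μ' is the conjugate partition. Let λ be a covariant weight with 0 ≤ λ_i − μ_i ≤ n, and define ν₁^{(s)} = mid{μ'_{s−1}, μ'_s, λ'_s} (the middle of the three integers, with μ'₀ sufficiently large). Then the rational function identity holds: (u+λ_{m+1}+m)/(u+m) · ∏_{i : λ_i−μ_i ≥ 1} (u−μ_i+i)/(u−μ_i+i−1) = ∏_{s=1}^{r+1}(u+ν₁^{(s)}−s+1) / (∏_{s=1}^{r}(u+μ'_s−s+1) · (u−r)). -/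

import Mathlib

/-!
The rows `i` with `μ_i < λ_i` are grouped by `s = μ_i + 1`. For antitone sequences such a
group is the interval `μ'_s ≤ i < min (μ'_{s-1}) #{i | s ≤ λ_i}`, so its factors telescope
to a single quotient per column `s`, and the denominators are the right-hand ones
(`μ'_{r+1} = 0` produces `u - r`). For `s ≥ 2` the telescoped numerator
`min (μ'_{s-1}) #{i | s ≤ λ_i}` equals `ν₁^{(s)}`: by the hook condition on `λ`, column `s`
of `Γ_λ` reaches below row `m` only when all `m` rows above reach it. For `s = 1` one has
`λ'_1 = #{i | 1 ≤ λ_i} + λ_{m+1}`, and the prefactor `(u + λ_{m+1} + m) / (u + m)` accounts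
for the difference.
-/

/-- Row lengths of the Young diagram `Γ_λ` attached to the covariant highest
weight `λ = (lam | nu)`. -/
def GammaRows (m n : ℕ) (lam : Fin m → ℕ) (nu : Fin n → ℕ) : ℕ → ℕ :=
  fun i => if h : i < m then lam ⟨i, h⟩
    else (Finset.univ.filter fun p : Fin n => i - m + 1 ≤ nu p).card

open Finset

section Conjugate

variable {m : ℕ}

def conjugate (f : Fin m → ℕ) (s : ℕ) : ℕ := #{i | s ≤ f i}

lemma conjugate_le (f : Fin m → ℕ) (s : ℕ) : conjugate f s ≤ m :=
  (card_filter_le _ _).trans (card_fin m).le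

lemma conjugate_zero (f : Fin m → ℕ) : conjugate f 0 = m := by
  simp [conjugate]

lemma antitone_conjugate (f : Fin m → ℕ) : Antitone (conjugate f) :=
  fun _ _ hst => card_le_card fun i => by simpa using hst.trans

lemma conjugate_mono {f g : Fin m → ℕ} (hfg : f ≤ g) (s : ℕ) : conjugate f s ≤ conjugate g s :=
  card_le_card fun i => by simpa using (·.trans (hfg i))

lemma conjugate_eq_zero {f : Fin m → ℕ} {s : ℕ} (hf : ∀ i, f i < s) : conjugate f s = 0 := by
  simpa [conjugate, filter_eq_empty_iff] using hf

lemma le_iff_lt_conjugate {f : Fin m → ℕ} (hf : Antitone f) {s : ℕ} {i : Fin m} :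
    s ≤ f i ↔ (i : ℕ) < conjugate f s := by
  constructor
  · intro hs
    have hsub : Iic i ⊆ ({j | s ≤ f j} : Finset (Fin m)) := fun j hj =>
      mem_filter.2 ⟨mem_univ j, hs.trans (hf (mem_Iic.1 hj))⟩
    exact Nat.lt_iff_add_one_le.2 ((Fin.card_Iic i).symm.trans_le (card_le_card hsub))
  · intro hi
    by_contra hs
    have hsub : ({j | s ≤ f j} : Finset (Fin m)) ⊆ Iio i := fun j hj =>
      mem_Iio.2 (lt_of_not_ge fun hij => hs ((mem_filter.1 hj).2.trans (hf hij)))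
    simpa [conjugate] using hi.trans_le (card_le_card hsub)

def extendByZero (f : Fin m → ℕ) (c : ℕ) : ℕ := if h : c < m then f ⟨c, h⟩ else 0

lemma lt_conjugate_add_one_iff {f : Fin m → ℕ} (hf : Antitone f) {c k : ℕ} :
    c < conjugate f (k + 1) ↔ k < extendByZero f c := by
  unfold extendByZero
  split_ifs with hc
  · exact (le_iff_lt_conjugate hf (i := ⟨c, hc⟩)).symm.trans Nat.add_one_le_iff
  · simpa using (conjugate_le f _).trans (not_lt.1 hc)

lemma image_val_fiber_eq_Ico {mu lam : Fin m → ℕ} (hmu : Antitone mu) (hlam : Antitone lam)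
    {s : ℕ} (hs : 1 ≤ s) :
    (({i | mu i + 1 ≤ lam i} : Finset (Fin m)).filter (mu · + 1 = s)).image Fin.val
      = Ico (conjugate mu s) (min (conjugate mu (s - 1)) (conjugate lam s)) := by
  ext k
  simp only [mem_image, mem_filter, mem_univ, true_and, mem_Ico, lt_min_iff]
  constructor
  · rintro ⟨i, ⟨hil, rfl⟩, rfl⟩
    have h1 := (le_iff_lt_conjugate hmu (s := mu i + 1 - 1) (i := i)).1 (by omega)
    have h2 := mt (le_iff_lt_conjugate hmu (s := mu i + 1) (i := i)).2 (by omega)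
    have h3 := (le_iff_lt_conjugate hlam).1 hil
    omega
  · rintro ⟨hk, hk1, hk2⟩
    have hkm : k < m := hk2.trans_le (conjugate_le lam s)
    refine ⟨⟨k, hkm⟩, ?_, rfl⟩
    have h1 : s - 1 ≤ mu ⟨k, hkm⟩ := (le_iff_lt_conjugate hmu).2 hk1
    have h2 := mt (le_iff_lt_conjugate hmu (s := s) (i := ⟨k, hkm⟩)).1 (by simpa using hk)
    have h3 : s ≤ lam ⟨k, hkm⟩ := (le_iff_lt_conjugate hlam).2 hk2
    omega

end Conjugate

section Hook

variable {m n : ℕ} {lam : Fin m → ℕ} {nu : Fin n → ℕ}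

lemma card_column_gammaRows (hlam : Antitone lam) (hnu : Antitone nu) (c : ℕ) :
    Nat.card {i : ℕ // c < GammaRows m n lam nu i}
      = conjugate lam (c + 1) + extendByZero nu c := by
  have hcol : {i : ℕ | c < GammaRows m n lam nu i}
      = ↑(range (conjugate lam (c + 1)) ∪ Ico m (m + extendByZero nu c)) := by
    ext i
    have hlm := conjugate_le lam (c + 1)
    simp only [Set.mem_ofPred_eq, coe_union, coe_range, coe_Ico, Set.mem_union, Set.mem_Iio,
      Set.mem_Ico, GammaRows]
    split_ifs with hi
    · have : c + 1 ≤ lam ⟨i, hi⟩ ↔ i < conjugate lam (c + 1) := le_iff_lt_conjugate hlam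
      omega
    · have := lt_conjugate_add_one_iff hnu (c := c) (k := i - m)
      unfold conjugate at this
      omega
  rw [← Set.coe_ofPred, Nat.card_coe_set_eq, hcol, Set.ncard_coe_finset,
    card_union_of_disjoint, card_range, Nat.card_Ico, Nat.add_sub_cancel_left]
  exact disjoint_left.2 fun i hi hi' =>
    (mem_Ico.1 hi').1.not_gt ((mem_range.1 hi).trans_le (conjugate_le lam _))

lemma extendByZero_eq_zero_of_conjugate_le (hlam : Antitone lam) (hnu : Antitone nu)
    {i : Fin m} (hi : #{p | nu p ≠ 0} ≤ lam i) {c : ℕ} (hc : conjugate lam (c + 1) ≤ i) :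
    extendByZero nu c = 0 := by
  by_contra h
  have hc1 : c < #{p | nu p ≠ 0} := by
    simpa [conjugate, Nat.one_le_iff_ne_zero] using
      (lt_conjugate_add_one_iff hnu).2 (Nat.pos_of_ne_zero h)
  have := (le_iff_lt_conjugate hlam).1 (show c + 1 ≤ lam i by omega)
  omega

end Hook

lemma max_min_add_eq_min {a b t e m : ℕ} (hab : a ≤ b) (hat : a ≤ t) (hbm : b ≤ m)
    (hook : t < m → e = 0) : max a (min b (t + e)) = min b t := by
  rcases lt_or_ge t m with ht | ht
  · rw [hook ht, add_zero, max_eq_right (le_min hab hat)]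
  · rw [min_eq_left (hbm.trans ht), min_eq_left (hbm.trans (ht.trans le_self_add)),
      max_eq_right hab]

lemma RatFunc.X_add_intCast_ne_zero {K : Type*} [Field K] (z : ℤ) :
    (RatFunc.X : RatFunc K) + z ≠ 0 := by
  rw [← map_intCast (algebraMap (Polynomial K) (RatFunc K)), ← RatFunc.algebraMap_X, ← map_add]
  exact RatFunc.algebraMap_ne_zero (by simpa using Polynomial.X_add_C_ne_zero (z : K))

lemma Finset.prod_Ico_div_of_ne_zero {K : Type*} [Field K] (g : ℕ → K) (hg : ∀ i, g i ≠ 0)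
    {a b : ℕ} (hab : a ≤ b) : ∏ i ∈ Ico a b, g (i + 1) / g i = g b / g a := by
  simpa [Units.coe_prod] using
    congrArg Units.val (prod_Ico_div (fun i => Units.mk0 (g i) (hg i)) hab)

section Field

variable {K : Type*} [Field K]

def linFactor (x : K) (a s : ℕ) : K := x + (((a : ℤ) - s + 1 : ℤ) : K)

lemma prod_rows_eq_prod_columns (x : K) (hx : ∀ z : ℤ, x + z ≠ 0) {m : ℕ}
    {mu lam : Fin m → ℕ} (hmu : Antitone mu) (hlam : Antitone lam) (hle : mu ≤ lam) {r : ℕ}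
    (hr : ∀ i, mu i ≤ r) :
    ∏ i with mu i + 1 ≤ lam i,
        (x - (mu i : K) + ((i : ℕ) + 1 : K)) / (x - (mu i : K) + ((i : ℕ) : K))
      = ∏ s ∈ Icc 1 (r + 1), linFactor x (min (conjugate mu (s - 1)) (conjugate lam s)) s
          / linFactor x (conjugate mu s) s := by
  rw [← prod_fiberwise_of_maps_to (g := fun i => mu i + 1) (t := Icc 1 (r + 1))
    fun i _ => mem_Icc.2 ⟨le_add_self, Nat.add_le_add_right (hr i) 1⟩]
  refine prod_congr rfl fun s hs => ?_
  have hs1 : 1 ≤ s := (mem_Icc.1 hs).1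
  have hab : conjugate mu s ≤ min (conjugate mu (s - 1)) (conjugate lam s) :=
    le_min (antitone_conjugate mu (Nat.sub_le s 1)) (conjugate_mono hle s)
  rw [← prod_Ico_div_of_ne_zero (fun a => linFactor x a s) (fun a => hx _) hab,
    ← image_val_fiber_eq_Ico hmu hlam hs1, prod_image Fin.val_injective.injOn]
  refine prod_congr rfl fun i hi => ?_
  obtain rfl := (mem_filter.1 hi).2
  simp only [linFactor]
  push_cast
  ring

lemma prefactor_mul_prod_rows_eq (x : K) (hx : ∀ z : ℤ, x + z ≠ 0) {m : ℕ}
    {mu lam : Fin m → ℕ} (hmu : Antitone mu) (hlam : Antitone lam) (hle : mu ≤ lam) {r : ℕ}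
    (hr : ∀ i, mu i ≤ r) {ν₀ : ℕ} (hook : conjugate lam 1 = m ∨ ν₀ = 0) {N : ℕ → ℕ}
    (hN₁ : N 1 = conjugate lam 1 + ν₀)
    (hN : ∀ s ∈ Ioc 1 (r + 1), N s = min (conjugate mu (s - 1)) (conjugate lam s)) :
    (x + (ν₀ : K) + (m : K)) / (x + (m : K))
        * ∏ i with mu i + 1 ≤ lam i,
            (x - (mu i : K) + ((i : ℕ) + 1 : K)) / (x - (mu i : K) + ((i : ℕ) : K))
      = (∏ s ∈ Icc 1 (r + 1), linFactor x (N s) s)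
          / ((∏ s ∈ Icc 1 r, linFactor x (conjugate mu s) s) * (x - (r : K))) := by
  have hden : ∏ s ∈ Icc 1 (r + 1), linFactor x (conjugate mu s) s
      = (∏ s ∈ Icc 1 r, linFactor x (conjugate mu s) s) * (x - r) := by
    rw [prod_Icc_succ_top (by omega), conjugate_eq_zero fun i => Nat.lt_succ_of_le (hr i)]
    congr 1
    simp only [linFactor]
    push_cast
    ring
  have hsplit (f : ℕ → K) : ∏ s ∈ Icc 1 (r + 1), f s = f 1 * ∏ s ∈ Ioc 1 (r + 1), f s :=
    (mul_prod_Ioc_eq_prod_Icc (by omega)).symm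
  have htail : ∏ s ∈ Ioc 1 (r + 1), linFactor x (N s) s
      = ∏ s ∈ Ioc 1 (r + 1), linFactor x (min (conjugate mu (s - 1)) (conjugate lam s)) s :=
    prod_congr rfl fun s hs => by rw [hN s hs]
  have hxm : x + (m : K) ≠ 0 := by exact_mod_cast hx m
  rw [prod_rows_eq_prod_columns x hx hmu hlam hle hr, prod_div_distrib, hden, hsplit, hsplit, hN₁,
    htail, Nat.sub_self, conjugate_zero, min_eq_right (conjugate_le lam 1)]
  simp only [linFactor]
  rcases hook with h | h <;> rw [h] <;> field_simp <;> push_cast <;> ring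

end Field

/-- with `μ' ` the conjugate of the partition `μ`, `λ'_s` the
column heights of `Γ_λ`, `r = μ₁`, and
`ν₁^{(s)} = mid{μ'_{s-1}, μ'_s, λ'_s} = max (μ'_s) (min (μ'_{s-1}) (λ'_s))`
(`μ'₀` sufficiently large, e.g. `μ'₀ = λ'₁`), the identity of rational functions
in `u` holds:
`(u + λ_{m+1} + m)/(u + m) · ∏_{λ_i - μ_i ≥ 1} (u - μ_i + i)/(u - μ_i + i - 1)
 = ∏_{s=1}^{r+1} (u + ν₁^{(s)} - s + 1)
   / (∏_{s=1}^{r} (u + μ'_s - s + 1) · (u - r))`. -/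
theorem stmt_14 (m n : ℕ) (hm : 0 < m) (hn : 0 < n)
    (lam : Fin m → ℕ) (nu : Fin n → ℕ)
    (hlam : ∀ i j : Fin m, i ≤ j → lam j ≤ lam i)
    (hnu : ∀ p q : Fin n, p ≤ q → nu q ≤ nu p)
    (hell : (Finset.univ.filter fun p : Fin n => nu p ≠ 0).card
      ≤ lam ⟨m - 1, Nat.sub_lt hm one_pos⟩)
    (mu : Fin m → ℕ) (hmu : ∀ i j : Fin m, i ≤ j → mu j ≤ mu i)
    (hmulam : ∀ i : Fin m, mu i ≤ lam i ∧ lam i ≤ mu i + n)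
    (r : ℕ) (hr : r = mu ⟨0, hm⟩)
    (lamcol : ℕ → ℕ)
    (hlamcol : ∀ j, lamcol j = Nat.card {i : ℕ // j - 1 < GammaRows m n lam nu i})
    (mucol : ℕ → ℕ)
    (hmucol : ∀ j, mucol j = if j = 0 then lamcol 1
      else (Finset.univ.filter fun i : Fin m => j ≤ mu i).card)
    (nu1 : ℕ → ℕ)
    (hnu1 : ∀ s, nu1 s = max (mucol s) (min (mucol (s - 1)) (lamcol s))) :
    ((RatFunc.X : RatFunc ℚ) + (nu ⟨0, hn⟩ : RatFunc ℚ) + (m : RatFunc ℚ))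
        / ((RatFunc.X : RatFunc ℚ) + (m : RatFunc ℚ))
        * ∏ i ∈ Finset.univ.filter (fun i : Fin m => mu i + 1 ≤ lam i),
            ((RatFunc.X : RatFunc ℚ) - (mu i : RatFunc ℚ) + ((i : ℕ) + 1 : RatFunc ℚ))
            / ((RatFunc.X : RatFunc ℚ) - (mu i : RatFunc ℚ) + ((i : ℕ) : RatFunc ℚ))
    = (∏ s ∈ Finset.Icc 1 (r + 1),
          ((RatFunc.X : RatFunc ℚ) + (((nu1 s : ℤ) - s + 1 : ℤ) : RatFunc ℚ)))
        / ((∏ s ∈ Finset.Icc 1 r,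
              ((RatFunc.X : RatFunc ℚ) + (((mucol s : ℤ) - s + 1 : ℤ) : RatFunc ℚ)))
            * ((RatFunc.X : RatFunc ℚ) - (r : RatFunc ℚ))) := by
  have hle : mu ≤ lam := fun i => (hmulam i).1
  have hmu_le : ∀ i, mu i ≤ r := fun i => hr ▸ hmu ⟨0, hm⟩ i (Nat.zero_le _)
  have hmucol_eq : ∀ s ≠ 0, mucol s = conjugate mu s := fun s hs => by
    rw [hmucol, if_neg hs]; rfl
  have hlamcol_eq : ∀ c, lamcol (c + 1) = conjugate lam (c + 1) + extendByZero nu c := fun c => by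
    rw [hlamcol, Nat.add_sub_cancel]; exact card_column_gammaRows hlam hnu c
  have hook : ∀ c, conjugate lam (c + 1) < m → extendByZero nu c = 0 := fun c hc =>
    extendByZero_eq_zero_of_conjugate_le hlam hnu hell (by simp; omega)
  have hnu1_one : nu1 1 = conjugate lam 1 + nu ⟨0, hn⟩ := by
    have hlamcol_one : lamcol 1 = conjugate lam 1 + nu ⟨0, hn⟩ := by
      rw [← zero_add 1, hlamcol_eq]; exact congrArg _ (dif_pos hn)
    rw [hnu1, Nat.sub_self, hmucol 0, if_pos rfl, hmucol_eq 1 one_ne_zero, hlamcol_one, min_self]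
    exact max_eq_right ((conjugate_mono hle 1).trans le_self_add)
  have hnu1_tail : ∀ s ∈ Ioc 1 (r + 1), nu1 s = min (conjugate mu (s - 1)) (conjugate lam s) := by
    intro s hs
    obtain ⟨c, rfl⟩ : ∃ c, s = c + 1 := ⟨s - 1, by grind⟩
    rw [hnu1, hmucol_eq _ (by grind), hmucol_eq _ (by grind), hlamcol_eq, Nat.add_sub_cancel]
    exact max_min_add_eq_min (antitone_conjugate mu c.le_succ) (conjugate_mono hle _)
      (conjugate_le mu c) (hook c)
  have hook₀ : conjugate lam 1 = m ∨ nu ⟨0, hn⟩ = 0 :=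
    (conjugate_le lam 1).eq_or_lt.imp id fun hlt => (dif_pos hn).symm.trans (hook 0 hlt)
  refine (prefactor_mul_prod_rows_eq RatFunc.X RatFunc.X_add_intCast_ne_zero hmu hlam hle hmu_le
    hook₀ hnu1_one hnu1_tail).trans ?_
  congr 2
  exact prod_congr rfl fun s hs => by rw [hmucol_eq s (by grind)]; rfl
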